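/- arXiv:1803.01082 — 8 statements merged into one kernel-verified Lean document; each statement's English description precedes it below -/
import Mathlib

section
/- Let μ₁, μ₂ be positive reals with μ₁ ≠ μ₂, let p ∈ (0,1) satisfy p/μ₁ + (1−p)/μ₂ = 1 (unit-mean hyper-exponential service distribution), and let θ > 0. Then θ·(θ + μ₁μ₂)/(2(θ + μ₁ + μ₂ − 1)) > μ₁μ₂·θ/(2(μ₁ + μ₂ − 1)); equivalently, the true large-deviations exponent −θ(θ + μ₁μ₂)/(2(θ + μ₁ + μ₂ − 1)) is strictly less than the conjectured exponent −μ₁μ₂θ/(2(μ₁ + μ₂ − 1)). -/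
/-! Unit mean means `1` is a strict convex combination `p / μ₁ + (1 - p) / μ₂` of two distinct
points, so `1` lies strictly between `1 / μ₁` and `1 / μ₂`; hence `(μ₁ - 1)(μ₂ - 1) < 0`, i.e.
`μ₁μ₂ < μ₁ + μ₂ - 1`. Both exponents are `θ / 2` times a fraction, `μ₁μ₂ / (μ₁ + μ₂ - 1)` and
`(θ + μ₁μ₂) / (θ + μ₁ + μ₂ - 1)`, and adding `θ > 0` to the numerator and denominator of a
positive fraction below `1` increases it. -/

section

variable {K : Type*} [Field K] [LinearOrder K] [IsStrictOrderedRing K]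

lemma sub_mul_sub_neg_of_convex_combination {a b c p : K} (hp0 : 0 < p) (hp1 : p < 1)
    (hab : a ≠ b) (hc : p * a + (1 - p) * b = c) : (a - c) * (b - c) < 0 := by
  have hsq : 0 < (a - b) ^ 2 := by positivity [sub_ne_zero.mpr hab]
  have hac : a - c = (1 - p) * (a - b) := by rw [← hc]; ring
  have hbc : b - c = -(p * (a - b)) := by rw [← hc]; ring
  rw [hac, hbc]
  nlinarith [mul_pos (mul_pos hp0 (sub_pos.mpr hp1)) hsq]

lemma mul_lt_add_sub_one_of_unit_mean {μ₁ μ₂ p : K} (hμ₁ : 0 < μ₁) (hμ₂ : 0 < μ₂)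
    (hne : μ₁ ≠ μ₂) (hp0 : 0 < p) (hp1 : p < 1) (hmean : p / μ₁ + (1 - p) / μ₂ = 1) :
    μ₁ * μ₂ < μ₁ + μ₂ - 1 := by
  have hinv : (1 / μ₁ - 1) * (1 / μ₂ - 1) < 0 :=
    sub_mul_sub_neg_of_convex_combination hp0 hp1
      (by rwa [Ne, one_div, one_div, inv_inj]) (by rwa [mul_one_div, mul_one_div])
  have hprod : (1 / μ₁ - 1) * (1 / μ₂ - 1) = (μ₁ - 1) * (μ₂ - 1) / (μ₁ * μ₂) := by
    field_simp
    ring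
  rw [hprod, div_lt_iff₀ (mul_pos hμ₁ hμ₂), zero_mul] at hinv
  linarith

lemma div_lt_add_div_add {a b c : K} (hb : 0 < b) (hab : a < b) (hc : 0 < c) :
    a / b < (c + a) / (c + b) := by
  rw [div_lt_div_iff₀ hb (by linarith)]
  nlinarith

end

/-- The true large-deviations exponent is strictly less than Dai and He's
conjectured exponent: for a unit-mean hyper-exponential service distribution
with `μ₁ ≠ μ₂`, one has
`θ(θ + μ₁μ₂)/(2(θ + μ₁ + μ₂ − 1)) > μ₁μ₂θ/(2(μ₁ + μ₂ − 1))`. -/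
theorem true_exponent_strictly_greater
    (μ₁ μ₂ p θ : ℝ)
    (hμ₁ : 0 < μ₁) (hμ₂ : 0 < μ₂) (hne : μ₁ ≠ μ₂)
    (hp0 : 0 < p) (hp1 : p < 1)
    (hmean : p / μ₁ + (1 - p) / μ₂ = 1)
    (hθ : 0 < θ) :
    θ * (θ + μ₁ * μ₂) / (2 * (θ + μ₁ + μ₂ - 1))
      > μ₁ * μ₂ * θ / (2 * (μ₁ + μ₂ - 1)) := by
  have hkey := mul_lt_add_sub_one_of_unit_mean hμ₁ hμ₂ hne hp0 hp1 hmean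
  have hfrac := div_lt_add_div_add ((mul_pos hμ₁ hμ₂).trans hkey) hkey hθ
  calc μ₁ * μ₂ * θ / (2 * (μ₁ + μ₂ - 1))
      = θ / 2 * (μ₁ * μ₂ / (μ₁ + μ₂ - 1)) := by rw [div_mul_div_comm]; ring
    _ < θ / 2 * ((θ + μ₁ * μ₂) / (θ + (μ₁ + μ₂ - 1))) := by gcongr
    _ = θ * (θ + μ₁ * μ₂) / (2 * (θ + μ₁ + μ₂ - 1)) := by rw [div_mul_div_comm]; ring
end

section
/- Let μ₁ᵃ = (15 − 2√2)/31, μ₂ᵃ = 2√2, pᵃ = (121 − 32√2)/257, μ₁ᵇ = (3 − √2)/7, μ₂ᵇ = √2, pᵇ = (7 − 4√2)/17, and θ₀ = 1/5. Then: μ₁ᵃ, μ₂ᵃ, μ₁ᵇ, μ₂ᵇ are all positive; 0 < θ₀ < min(μ₁ᵃ, μ₂ᵃ, μ₁ᵇ, μ₂ᵇ); pᵃ/μ₁ᵃ + (1−pᵃ)/μ₂ᵃ = 1 and pᵇ/μ₁ᵇ + (1−pᵇ)/μ₂ᵇ = 1 (both distributions have mean 1); 2pᵃ/(μ₁ᵃ)²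 + 2(1−pᵃ)/(μ₂ᵃ)² = 4 and 2pᵇ/(μ₁ᵇ)² + 2(1−pᵇ)/(μ₂ᵇ)² = 4 (both have second moment 4); but θ₀(θ₀ + μ₁ᵃμ₂ᵃ)/(2(θ₀ + μ₁ᵃ + μ₂ᵃ − 1)) ≠ θ₀(θ₀ + μ₁ᵇμ₂ᵇ)/(2(θ₀ + μ₁ᵇ + μ₂ᵇ − 1)). -/
/-!
Write `a = μ₁⁻¹`, `b = μ₂⁻¹` for the branch means. A hyper-exponential law has mean `1` iff
`p (a - b) = 1 - b`, and then its second moment is `2 (a + b - a b) = 2 (1 - (1 - a) (1 - b))`.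
So the rates with `(1 - a) (1 - b) = -1`, with `p` chosen to fix the mean, form a one-parameter
family of laws with mean `1` and second moment `4`. The exponent depends on `μ₁ + μ₂` and `μ₁ μ₂`,
which vary along this family: for the two members chosen here, both in `ℚ(√2)`, equal exponents
would force `2 + 39 √2 = 0`.
-/

open Real

noncomputable section

def hyperExpMean (p μ₁ μ₂ : ℝ) : ℝ := p / μ₁ + (1 - p) / μ₂

def hyperExpSecondMoment (p μ₁ μ₂ : ℝ) : ℝ := 2 * p / μ₁ ^ 2 + 2 * (1 - p) / μ₂ ^ 2

end

theorem hyperExpMean_eq_one_iff (p μ₁ μ₂ : ℝ) :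
    hyperExpMean p μ₁ μ₂ = 1 ↔ p * (μ₁⁻¹ - μ₂⁻¹) = 1 - μ₂⁻¹ := by
  unfold hyperExpMean
  constructor <;> intro h <;> linear_combination h

theorem hyperExpSecondMoment_eq (p μ₁ μ₂ : ℝ) :
    hyperExpSecondMoment p μ₁ μ₂
      = 2 * ((μ₁⁻¹ + μ₂⁻¹) * hyperExpMean p μ₁ μ₂ - μ₁⁻¹ * μ₂⁻¹) := by
  simp only [hyperExpSecondMoment, hyperExpMean, div_eq_mul_inv]
  ring

theorem hyperExp_moments_of_inv {p μ₁ μ₂ a b : ℝ} (ha : μ₁⁻¹ = a) (hb : μ₂⁻¹ = b)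
    (hp : p * (a - b) = 1 - b) (hab : (1 - a) * (1 - b) = -1) :
    hyperExpMean p μ₁ μ₂ = 1 ∧ hyperExpSecondMoment p μ₁ μ₂ = 4 := by
  subst ha hb
  have hmean : hyperExpMean p μ₁ μ₂ = 1 := (hyperExpMean_eq_one_iff p μ₁ μ₂).2 hp
  refine ⟨hmean, ?_⟩
  rw [hyperExpSecondMoment_eq, hmean]
  linear_combination -2 * hab

theorem sq_sqrt_two : √2 ^ 2 = 2 := sq_sqrt zero_le_two

theorem moments_first_example :
    hyperExpMean ((121 - 32 * √2) / 257) ((15 - 2 * √2) / 31) (2 * √2) = 1 ∧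
      hyperExpSecondMoment ((121 - 32 * √2) / 257) ((15 - 2 * √2) / 31) (2 * √2) = 4 := by
  have hμ₁ : ((15 - 2 * √2) / 31)⁻¹ = (15 + 2 * √2) / 7 := by
    have : 15 - 2 * √2 ≠ 0 := by linarith [sqrt_two_lt_three_halves]
    rw [inv_div, div_eq_div_iff this (by norm_num)]
    linear_combination 4 * sq_sqrt_two
  have hμ₂ : (2 * √2)⁻¹ = √2 / 4 := by
    field_simp
    linear_combination (-2) * sq_sqrt_two
  refine hyperExp_moments_of_inv hμ₁ hμ₂ ?_ ?_
  · linear_combination (-8 / 1799) * sq_sqrt_two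
  · linear_combination (1 / 14) * sq_sqrt_two

theorem moments_second_example :
    hyperExpMean ((7 - 4 * √2) / 17) ((3 - √2) / 7) √2 = 1 ∧
      hyperExpSecondMoment ((7 - 4 * √2) / 17) ((3 - √2) / 7) √2 = 4 := by
  have hμ₁ : ((3 - √2) / 7)⁻¹ = 3 + √2 := by
    have : 3 - √2 ≠ 0 := by linarith [sqrt_two_lt_three_halves]
    rw [inv_div, div_eq_iff this]
    linear_combination sq_sqrt_two
  refine hyperExp_moments_of_inv hμ₁ sqrt_div_self.symm ?_ ?_
  · linear_combination (-2 / 17) * sq_sqrt_two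
  · linear_combination (1 / 2) * sq_sqrt_two

/-- Two explicit hyper-exponential distributions with equal first two moments
(mean 1, second moment 4) but different large-deviations exponents for the
abandonment rate `θ₀ = 1/5`, disproving the insensitivity conjectured by
Dai and He. -/
theorem non_insensitivity_example :
    let μ₁a : ℝ := (15 - 2 * Real.sqrt 2) / 31
    let μ₂a : ℝ := 2 * Real.sqrt 2
    let pa : ℝ := (121 - 32 * Real.sqrt 2) / 257
    let μ₁b : ℝ := (3 - Real.sqrt 2) / 7
    let μ₂b : ℝ := Real.sqrt 2
    let pb : ℝ := (7 - 4 * Real.sqrt 2) / 17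
    let θ₀ : ℝ := 1 / 5
    0 < μ₁a ∧ 0 < μ₂a ∧ 0 < μ₁b ∧ 0 < μ₂b ∧
    0 < θ₀ ∧ θ₀ < min (min μ₁a μ₂a) (min μ₁b μ₂b) ∧
    pa / μ₁a + (1 - pa) / μ₂a = 1 ∧
    pb / μ₁b + (1 - pb) / μ₂b = 1 ∧
    2 * pa / μ₁a ^ 2 + 2 * (1 - pa) / μ₂a ^ 2 = 4 ∧
    2 * pb / μ₁b ^ 2 + 2 * (1 - pb) / μ₂b ^ 2 = 4 ∧
    θ₀ * (θ₀ + μ₁a * μ₂a) / (2 * (θ₀ + μ₁a + μ₂a - 1))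
      ≠ θ₀ * (θ₀ + μ₁b * μ₂b) / (2 * (θ₀ + μ₁b + μ₂b - 1)) := by
  dsimp only
  have h_lo := one_lt_sqrt_two
  have h_hi := sqrt_two_lt_three_halves
  obtain ⟨hmean_a, hsecond_a⟩ := moments_first_example
  obtain ⟨hmean_b, hsecond_b⟩ := moments_second_example
  refine ⟨by linarith, by positivity, by linarith, by positivity, by norm_num, ?_,
    hmean_a, hmean_b, hsecond_a, hsecond_b, ?_⟩
  · simp only [lt_min_iff]
    refine ⟨⟨?_, ?_⟩, ?_, ?_⟩ <;> linarith
  · rw [Ne, div_eq_div_iff (by linarith) (by linarith)]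
    intro h
    have : 2 + 39 * √2 = 0 := by
      linear_combination (-5425 / 6) * h + (1 + 60 * √2) * sq_sqrt_two
    linarith
end

section
/- Let a, θ be reals with 0 < θ < a, and let 0 ≤ s ≤ t. Then 2·∫_s^t ( ∫_s^{y₂} exp(−θ(y₁+y₂))·exp(−a(y₂−y₁)) dy₁ ) dy₂ = exp(−2θs)/(θ(a+θ)) − exp(−2θt)/(θ(a−θ)) + 2·exp((a−θ)s)·exp(−(a+θ)t)/((a−θ)(a+θ)). -/
/-!
The integrand factors as `e^{-(a+θ) y₂} e^{(a-θ) y₁}`, so the inner integral is an elementary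
exponential integral, leaving a combination of `e^{-2θ y₂}` and `e^{-(a+θ) y₂}` to integrate over
`[s, t]`.
-/

open intervalIntegral Real

theorem integral_exp_mul {c : ℝ} (hc : c ≠ 0) (p q : ℝ) :
    ∫ x in p..q, exp (c * x) = (exp (c * q) - exp (c * p)) / c := by
  rw [integral_comp_mul_left (fun x => exp x) hc, integral_exp, smul_eq_mul, inv_mul_eq_div]

theorem integral_exp_neg_mul_add_mul_exp_neg_mul_sub {a θ : ℝ} (h : a - θ ≠ 0) (s y : ℝ) :
    ∫ y₁ in s..y, exp (-(θ * (y₁ + y))) * exp (-(a * (y - y₁)))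
      = (exp (-(2 * θ) * y) - exp ((a - θ) * s) * exp (-(a + θ) * y)) / (a - θ) := by
  have hfactor : ∀ y₁, exp (-(θ * (y₁ + y))) * exp (-(a * (y - y₁)))
      = exp (-(a + θ) * y) * exp ((a - θ) * y₁) := fun y₁ => by
    rw [← exp_add, ← exp_add]; ring_nf
  simp_rw [hfactor]
  rw [integral_const_mul, integral_exp_mul h, mul_div_assoc', mul_sub, ← exp_add,
    mul_comm (exp (-(a + θ) * y))]
  ring_nf

theorem covariance_core_integral_general
    (a θ s t : ℝ) (hθ : 0 < θ) (hθa : θ < a) :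
    2 * ∫ y₂ in s..t, (∫ y₁ in s..y₂,
        Real.exp (-(θ * (y₁ + y₂))) * Real.exp (-(a * (y₂ - y₁))))
      = Real.exp (-(2 * θ * s)) / (θ * (a + θ))
        - Real.exp (-(2 * θ * t)) / (θ * (a - θ))
        + 2 * Real.exp ((a - θ) * s) * Real.exp (-((a + θ) * t))
            / ((a - θ) * (a + θ)) := by
  have hsum : a + θ ≠ 0 := by linarith
  have hdiff : a - θ ≠ 0 := by linarith
  have hint (c : ℝ) : IntervalIntegrable (fun y => exp (c * y)) MeasureTheory.volume s t :=
    (continuous_exp.comp (continuous_const_mul c)).intervalIntegrable s t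
  have hcorner : exp ((a - θ) * s) * exp (-((a + θ) * s)) = exp (-(2 * θ * s)) := by
    rw [← exp_add]; ring_nf
  simp_rw [integral_exp_neg_mul_add_mul_exp_neg_mul_sub hdiff s]
  rw [integral_div, integral_sub (hint _) ((hint _).const_mul _), integral_const_mul,
    integral_exp_mul (by simpa using hθ.ne'), integral_exp_mul (neg_ne_zero.mpr hsum)]
  simp only [neg_mul]
  rw [← hcorner]
  field_simp
  ring

/-- The core iterated-integral computation in the covariance of the Gaussian
process `𝒢̄`: for `0 < θ < a` and `0 ≤ s ≤ t`,
`2∫_s^t ∫_s^{y₂} e^{−θ(y₁+y₂)} e^{−a(y₂−y₁)} dy₁ dy₂` equals the displayed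
explicit expression. -/
theorem covariance_core_integral
    (a θ s t : ℝ) (hθ : 0 < θ) (hθa : θ < a) (hs : 0 ≤ s) (hst : s ≤ t) :
    2 * ∫ y₂ in s..t, (∫ y₁ in s..y₂,
        Real.exp (-(θ * (y₁ + y₂))) * Real.exp (-(a * (y₂ - y₁))))
      = Real.exp (-(2 * θ * s)) / (θ * (a + θ))
        - Real.exp (-(2 * θ * t)) / (θ * (a - θ))
        + 2 * Real.exp ((a - θ) * s) * Real.exp (-((a + θ) * t))
            / ((a - θ) * (a + θ)) :=
  covariance_core_integral_general a θ s t hθ hθa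
end

section
/- Let μ₁, μ₂ be positive reals, p ∈ (0,1), and 0 < θ < μ₁μ₂. Define V(s,t) := (p(1−p)(μ₁−μ₂)²/(θμ₁μ₂(μ₁μ₂+θ)) + 1/θ)·exp(−2θs) − (p(1−p)(μ₁−μ₂)²/(θμ₁μ₂(μ₁μ₂−θ)) + 1/θ)·exp(−2θt) + (2p(1−p)(μ₁−μ₂)²/(μ₁μ₂(μ₁μ₂−θ)(μ₁μ₂+θ)))·exp((μ₁μ₂−θ)s)·exp(−(μ₁μ₂+θ)t). Then for each fixed s ≥ 0, the function t ↦ V(s,t) is strictly increasing on [s,∞); and for each fixed t ≥ 0, the function s ↦ V(s,t) is strictly decreasing on [0,t]. -/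
/-!
Put `a = μ₁μ₂ - θ`, `b = μ₁μ₂ + θ` (so `b - a = 2θ`) and let `C ≥ 0` be the coefficient of the
mixed term. Then `∂ₜV = 2e^{-2θt} + Cb (e^{-2θt} - e^{as-bt})` and
`∂ₛV = -2e^{-2θs} - Ca (e^{-2θs} - e^{as-bt})`, and for `s ≤ t` both brackets are nonnegative
because `as - bt` is at most `-(b-a)t` and `-(b-a)s`.
-/

open Real Set

lemma hasDerivAt_exp_const_mul (c x : ℝ) :
    HasDerivAt (fun x => exp (c * x)) (c * exp (c * x)) x := by
  simpa [mul_comm] using ((hasDerivAt_id x).const_mul c).exp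

/-- `V` is `varianceKernel (μ₁μ₂ - θ) (μ₁μ₂ + θ) (2p(1-p)(μ₁-μ₂)²/(μ₁μ₂(μ₁μ₂-θ)(μ₁μ₂+θ)))`. -/
noncomputable def varianceKernel (a b C s t : ℝ) : ℝ :=
  (C * a + 2) / (b - a) * exp (-(b - a) * s) - (C * b + 2) / (b - a) * exp (-(b - a) * t)
    + C * exp (a * s) * exp (-b * t)

section varianceKernel

variable {a b C : ℝ}

lemma hasDerivAt_varianceKernel_right (hab : a < b) (s t : ℝ) :
    HasDerivAt (varianceKernel a b C s)
      ((C * b + 2) * exp (-(b - a) * t) - C * b * (exp (a * s) * exp (-b * t))) t := by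
  have hba : b - a ≠ 0 := sub_ne_zero.mpr hab.ne'
  have h := (((hasDerivAt_exp_const_mul (-(b - a)) t).const_mul ((C * b + 2) / (b - a))).const_sub
    ((C * a + 2) / (b - a) * exp (-(b - a) * s))).add
    ((hasDerivAt_exp_const_mul (-b) t).const_mul (C * exp (a * s)))
  exact h.congr_deriv (by field_simp; ring)

lemma hasDerivAt_varianceKernel_left (hab : a < b) (s t : ℝ) :
    HasDerivAt (fun s => varianceKernel a b C s t)
      (-(C * a + 2) * exp (-(b - a) * s) + C * a * (exp (a * s) * exp (-b * t))) s := by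
  have hba : b - a ≠ 0 := sub_ne_zero.mpr hab.ne'
  have h := (((hasDerivAt_exp_const_mul (-(b - a)) s).const_mul ((C * a + 2) / (b - a))).sub_const
    ((C * b + 2) / (b - a) * exp (-(b - a) * t))).add
    (((hasDerivAt_exp_const_mul a s).const_mul C).mul_const (exp (-b * t)))
  exact h.congr_deriv (by field_simp)

lemma exp_mul_exp_le_of_le (ha : 0 ≤ a) (hb : 0 ≤ b) {s t : ℝ} (hst : s ≤ t) :
    exp (a * s) * exp (-b * t) ≤ exp (-(b - a) * t) ∧
      exp (a * s) * exp (-b * t) ≤ exp (-(b - a) * s) := by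
  rw [← exp_add]
  constructor <;> apply exp_le_exp.mpr <;> nlinarith

lemma continuous_varianceKernel_right (s : ℝ) : Continuous (varianceKernel a b C s) := by
  unfold varianceKernel; fun_prop

lemma continuous_varianceKernel_left (t : ℝ) : Continuous (fun s => varianceKernel a b C s t) := by
  unfold varianceKernel; fun_prop

lemma strictMonoOn_varianceKernel_right (ha : 0 ≤ a) (hab : a < b) (hC : 0 ≤ C) (s : ℝ) :
    StrictMonoOn (varianceKernel a b C s) (Ici s) := by
  refine strictMonoOn_of_deriv_pos (convex_Ici s) (continuous_varianceKernel_right s).continuousOn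
    fun t ht => ?_
  rw [interior_Ici, mem_Ioi] at ht
  rw [(hasDerivAt_varianceKernel_right hab s t).deriv]
  have hE := (exp_mul_exp_le_of_le ha (ha.trans hab.le) ht.le).1
  have hCb : 0 ≤ C * b := mul_nonneg hC (ha.trans hab.le)
  linarith [mul_le_mul_of_nonneg_left hE hCb, exp_pos (-(b - a) * t)]

lemma strictAntiOn_varianceKernel_left (ha : 0 ≤ a) (hab : a < b) (hC : 0 ≤ C) (t : ℝ) :
    StrictAntiOn (fun s => varianceKernel a b C s t) (Iic t) := by
  refine strictAntiOn_of_deriv_neg (convex_Iic t) (continuous_varianceKernel_left t).continuousOn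
    fun s hs => ?_
  rw [interior_Iic, mem_Iio] at hs
  rw [(hasDerivAt_varianceKernel_left hab s t).deriv]
  have hE := (exp_mul_exp_le_of_le ha (ha.trans hab.le) hs.le).2
  have hCa : 0 ≤ C * a := mul_nonneg hC ha
  linarith [mul_le_mul_of_nonneg_left hE hCa, exp_pos (-(b - a) * s)]

end varianceKernel

theorem variance_monotonicity_general
    (μ₁ μ₂ p θ : ℝ)
    (hp0 : 0 < p) (hp1 : p < 1)
    (hθ0 : 0 < θ) (hθ : θ < μ₁ * μ₂)
    (V : ℝ → ℝ → ℝ)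
    (hV : ∀ s t : ℝ,
      V s t =
        (p * (1 - p) * (μ₁ - μ₂) ^ 2 / (θ * (μ₁ * μ₂) * (μ₁ * μ₂ + θ)) + 1 / θ)
            * Real.exp (-(2 * θ * s))
        - (p * (1 - p) * (μ₁ - μ₂) ^ 2 / (θ * (μ₁ * μ₂) * (μ₁ * μ₂ - θ)) + 1 / θ)
            * Real.exp (-(2 * θ * t))
        + 2 * p * (1 - p) * (μ₁ - μ₂) ^ 2
              / ((μ₁ * μ₂) * (μ₁ * μ₂ - θ) * (μ₁ * μ₂ + θ))
            * Real.exp ((μ₁ * μ₂ - θ) * s) * Real.exp (-((μ₁ * μ₂ + θ) * t))) :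
    (∀ s : ℝ, 0 ≤ s → StrictMonoOn (fun t => V s t) (Set.Ici s)) ∧
    (∀ t : ℝ, 0 ≤ t → StrictAntiOn (fun s => V s t) (Set.Icc 0 t)) := by
  set m := μ₁ * μ₂
  set C := 2 * p * (1 - p) * (μ₁ - μ₂) ^ 2 / (m * (m - θ) * (m + θ)) with hC_def
  have hm : 0 < m := hθ0.trans hθ
  have hmθ : 0 < m - θ := sub_pos.mpr hθ
  have hab : m - θ < m + θ := by linarith
  have hC : 0 ≤ C := div_nonneg
    (mul_nonneg (mul_nonneg (by linarith) (by linarith)) (sq_nonneg _)) (by positivity)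
  have hcoef_s : p * (1 - p) * (μ₁ - μ₂) ^ 2 / (θ * m * (m + θ)) + 1 / θ
      = (C * (m - θ) + 2) / (2 * θ) := by
    rw [hC_def]; field_simp
  have hcoef_t : p * (1 - p) * (μ₁ - μ₂) ^ 2 / (θ * m * (m - θ)) + 1 / θ
      = (C * (m + θ) + 2) / (2 * θ) := by
    rw [hC_def]; field_simp
  have hVeq : V = varianceKernel (m - θ) (m + θ) C := by
    ext s t
    rw [hV, hcoef_s, hcoef_t, varianceKernel, show m + θ - (m - θ) = 2 * θ by ring]
    simp only [neg_mul]
  subst hVeq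
  exact ⟨fun s _ => strictMonoOn_varianceKernel_right hmθ.le hab hC s,
    fun t _ => (strictAntiOn_varianceKernel_left hmθ.le hab hC t).mono Icc_subset_Iic_self⟩

/-- Monotonicity of the variance function
`V(s,t) = E[(𝒢̄(t) − 𝒢̄(s))²]`: for each fixed `s ≥ 0` it is strictly
increasing in `t` on `[s,∞)`, and for each fixed `t ≥ 0` it is strictly
decreasing in `s` on `[0,t]`. -/
theorem variance_monotonicity
    (μ₁ μ₂ p θ : ℝ)
    (hμ₁ : 0 < μ₁) (hμ₂ : 0 < μ₂)
    (hp0 : 0 < p) (hp1 : p < 1)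
    (hθ0 : 0 < θ) (hθ : θ < μ₁ * μ₂)
    (V : ℝ → ℝ → ℝ)
    (hV : ∀ s t : ℝ,
      V s t =
        (p * (1 - p) * (μ₁ - μ₂) ^ 2 / (θ * (μ₁ * μ₂) * (μ₁ * μ₂ + θ)) + 1 / θ)
            * Real.exp (-(2 * θ * s))
        - (p * (1 - p) * (μ₁ - μ₂) ^ 2 / (θ * (μ₁ * μ₂) * (μ₁ * μ₂ - θ)) + 1 / θ)
            * Real.exp (-(2 * θ * t))
        + 2 * p * (1 - p) * (μ₁ - μ₂) ^ 2
              / ((μ₁ * μ₂) * (μ₁ * μ₂ - θ) * (μ₁ * μ₂ + θ))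
            * Real.exp ((μ₁ * μ₂ - θ) * s) * Real.exp (-((μ₁ * μ₂ + θ) * t))) :
    (∀ s : ℝ, 0 ≤ s → StrictMonoOn (fun t => V s t) (Set.Ici s)) ∧
    (∀ t : ℝ, 0 ≤ t → StrictAntiOn (fun s => V s t) (Set.Icc 0 t)) :=
  variance_monotonicity_general μ₁ μ₂ p θ hp0 hp1 hθ0 hθ V hV
end

section
/- Let μ₁, μ₂ be positive reals, p ∈ (0,1) with p/μ₁ + (1−p)/μ₂ = 1, and 0 < θ < μ₁μ₂. Define V(s,t) := (p(1−p)(μ₁−μ₂)²/(θμ₁μ₂(μ₁μ₂+θ)) + 1/θ)·exp(−2θs) − (p(1−p)(μ₁−μ₂)²/(θμ₁μ₂(μ₁μ₂−θ)) + 1/θ)·exp(−2θt) + (2p(1−p)(μ₁−μ₂)²/(μ₁μ₂(μ₁μ₂−θ)(μ₁μ₂+θ)))·exp((μ₁μ₂−θ)s)·exp(−(μ₁μ₂+θ)t). Then for all 0 ≤ s ≤ t, V(s,t) ≤ (θ + μ₁ + μ₂ − 1)/(θ(θ + μ₁μ₂)); that is, the diameter of the associated canonical pseudo-metric √V is √((θ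 + μ₁ + μ₂ − 1)/(θ(θ + μ₁μ₂))). -/
/-!
Write `m = μ₁μ₂`, `A = p(1−p)(μ₁−μ₂)² ≥ 0`, and `C₁, C₃ ≥ 0` for the coefficients of `exp(−2θs)`
and of the mixed term in `V`. The coefficient of `exp(−2θt)` is exactly `C₁ + C₃`, and since
`(m−θ)(s−t) ≤ 0` the mixed exponential is at most `exp(−2θt)`. Hence
`V(s,t) ≤ C₁(exp(−2θs) − exp(−2θt)) ≤ C₁`, and the mean-one normalization `pμ₂ + (1−p)μ₁ = m`
turns `C₁` into `(θ + μ₁ + μ₂ − 1)/(θ(θ + m))`.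
-/

open Real

lemma mul_sub_add_mul_le_of_le_one {a c x y z : ℝ} (ha : 0 ≤ a) (hc : 0 ≤ c) (hx : x ≤ 1)
    (hy : 0 ≤ y) (hzy : z ≤ y) : a * x - (a + c) * y + c * z ≤ a := by
  nlinarith [mul_le_mul_of_nonneg_left hzy hc, mul_le_mul_of_nonneg_left hx ha, mul_nonneg ha hy]

lemma exp_mul_exp_le_exp_of_le {m θ s t : ℝ} (hθm : θ ≤ m) (hst : s ≤ t) :
    exp ((m - θ) * s) * exp (-((m + θ) * t)) ≤ exp (-(2 * θ * t)) := by
  rw [← exp_add, exp_le_exp]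
  nlinarith [mul_nonneg (sub_nonneg.2 hθm) (sub_nonneg.2 hst)]

section Coefficients

variable {A m θ : ℝ}

lemma coeff_sub_eq_coeff_add_add (hθ : θ ≠ 0) (hm : m ≠ 0) (hsub : m - θ ≠ 0) (hadd : m + θ ≠ 0) :
    A / (θ * m * (m - θ)) + 1 / θ
      = (A / (θ * m * (m + θ)) + 1 / θ) + 2 * A / (m * (m - θ) * (m + θ)) := by
  field_simp
  ring

lemma variance_le_coeff (hA : 0 ≤ A) (hθ : 0 < θ) (hθm : θ < m) {s t : ℝ} (hs : 0 ≤ s)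
    (hst : s ≤ t) :
    (A / (θ * m * (m + θ)) + 1 / θ) * exp (-(2 * θ * s))
        - (A / (θ * m * (m - θ)) + 1 / θ) * exp (-(2 * θ * t))
        + 2 * A / (m * (m - θ) * (m + θ)) * exp ((m - θ) * s) * exp (-((m + θ) * t))
      ≤ A / (θ * m * (m + θ)) + 1 / θ := by
  have hm : 0 < m := hθ.trans hθm
  have hsub : 0 < m - θ := sub_pos.2 hθm
  rw [coeff_sub_eq_coeff_add_add hθ.ne' hm.ne' hsub.ne' (add_pos hm hθ).ne', mul_assoc _ (exp _)]
  refine mul_sub_add_mul_le_of_le_one (by positivity) (by positivity) ?_ (exp_pos _).le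
    (exp_mul_exp_le_exp_of_le hθm.le hst)
  rw [exp_le_one_iff, neg_nonpos]
  positivity

end Coefficients

lemma mul_one_sub_mul_sub_sq_eq_of_mean_eq_one {μ₁ μ₂ p : ℝ} (hμ₁ : μ₁ ≠ 0) (hμ₂ : μ₂ ≠ 0)
    (hmean : p / μ₁ + (1 - p) / μ₂ = 1) :
    p * (1 - p) * (μ₁ - μ₂) ^ 2 = μ₁ * μ₂ * (μ₁ + μ₂ - μ₁ * μ₂ - 1) := by
  have hrel : p * μ₂ + (1 - p) * μ₁ = μ₁ * μ₂ := by
    field_simp at hmean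
    linarith
  linear_combination (p * μ₁ + (1 - p) * μ₂ - μ₁ * μ₂) * hrel

/-- Diameter bound: for all `0 ≤ s ≤ t`,
`V(s,t) ≤ (θ + μ₁ + μ₂ − 1)/(θ(θ + μ₁μ₂))`, i.e. the diameter of the canonical
pseudo-metric `√V` is `√((θ + μ₁ + μ₂ − 1)/(θ(θ + μ₁μ₂)))`. -/
theorem variance_diameter_bound
    (μ₁ μ₂ p θ : ℝ)
    (hμ₁ : 0 < μ₁) (hμ₂ : 0 < μ₂)
    (hp0 : 0 < p) (hp1 : p < 1)
    (hmean : p / μ₁ + (1 - p) / μ₂ = 1)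
    (hθ0 : 0 < θ) (hθ : θ < μ₁ * μ₂)
    (V : ℝ → ℝ → ℝ)
    (hV : ∀ s t : ℝ,
      V s t =
        (p * (1 - p) * (μ₁ - μ₂) ^ 2 / (θ * (μ₁ * μ₂) * (μ₁ * μ₂ + θ)) + 1 / θ)
            * Real.exp (-(2 * θ * s))
        - (p * (1 - p) * (μ₁ - μ₂) ^ 2 / (θ * (μ₁ * μ₂) * (μ₁ * μ₂ - θ)) + 1 / θ)
            * Real.exp (-(2 * θ * t))
        + 2 * p * (1 - p) * (μ₁ - μ₂) ^ 2
              / ((μ₁ * μ₂) * (μ₁ * μ₂ - θ) * (μ₁ * μ₂ + θ))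
            * Real.exp ((μ₁ * μ₂ - θ) * s) * Real.exp (-((μ₁ * μ₂ + θ) * t))) :
    ∀ s t : ℝ, 0 ≤ s → s ≤ t →
      V s t ≤ (θ + μ₁ + μ₂ - 1) / (θ * (θ + μ₁ * μ₂)) := by
  intro s t hs hst
  have hA : 0 ≤ p * (1 - p) * (μ₁ - μ₂) ^ 2 := by
    have : 0 < 1 - p := sub_pos.2 hp1
    positivity
  rw [hV, show 2 * p * (1 - p) * (μ₁ - μ₂) ^ 2 = 2 * (p * (1 - p) * (μ₁ - μ₂) ^ 2) by ring]
  refine (variance_le_coeff hA hθ0 hθ hs hst).trans_eq ?_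
  rw [mul_one_sub_mul_sub_sq_eq_of_mean_eq_one hμ₁.ne' hμ₂.ne' hmean]
  field_simp
  ring
end

section
/- Let μ₁, μ₂ be positive reals, p ∈ (0,1), and 0 < θ < μ₁μ₂. Define V(s,t) := (p(1−p)(μ₁−μ₂)²/(θμ₁μ₂(μ₁μ₂+θ)) + 1/θ)·exp(−2θs) − (p(1−p)(μ₁−μ₂)²/(θμ₁μ₂(μ₁μ₂−θ)) + 1/θ)·exp(−2θt) + (2p(1−p)(μ₁−μ₂)²/(μ₁μ₂(μ₁μ₂−θ)(μ₁μ₂+θ)))·exp((μ₁μ₂−θ)s)·exp(−(μ₁μ₂+θ)t). Then for all 0 ≤ s ≤ t, √(V(s,t)) ≤ 4·√( p(1−p)(μ₁−μ₂)²/(μ₁μ₂(μ₁μ₂−θ)θ) + 1/θ )·√( 1 − exp(−(μ₁μ₂+θ)(t−s)) )·exp(−θs). -/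
/-!
Write `a = μ₁μ₂`, `k = p(1-p)(μ₁-μ₂)²` and `x = t - s`. Factoring out `e^{-2θs}` gives
`V(s,t) = e^{-2θs} (A - B e^{-2θx} + D e^{-(a+θ)x})`, where the coefficients satisfy `B = A + D`
with `A, D ≥ 0`. Since `e^{-(a+θ)x} ≤ e^{-2θx} ≤ 1`, the bracket is at most `B (1 - e^{-(a+θ)x})`,
so `√V ≤ √B · √(1 - e^{-(a+θ)x}) · e^{-θs}`.
-/

open Real

theorem sub_mul_exp_add_mul_exp_le {A D β γ x : ℝ} (hA : 0 ≤ A) (hD : 0 ≤ D)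
    (hβγ : β ≤ γ) (hγ : 0 ≤ γ) (hx : 0 ≤ x) :
    A - (A + D) * exp (-(β * x)) + D * exp (-(γ * x)) ≤ (A + D) * (1 - exp (-(γ * x))) := by
  have hγβ : exp (-(γ * x)) ≤ exp (-(β * x)) :=
    exp_le_exp.2 (neg_le_neg (mul_le_mul_of_nonneg_right hβγ hx))
  have hγ1 : exp (-(γ * x)) ≤ 1 := exp_le_one_iff.2 (neg_nonpos.2 (mul_nonneg hγ hx))
  nlinarith [mul_nonneg hA (sub_nonneg.2 hγβ), mul_nonneg hD (sub_nonneg.2 hγ1)]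

/-- The variance increment `E[(𝒢̄(t) − 𝒢̄(s))²]`, with `k = p(1-p)(μ₁-μ₂)²` and `a = μ₁μ₂`. -/
noncomputable def varianceIncrement (k a θ s t : ℝ) : ℝ :=
  (k / (θ * a * (a + θ)) + 1 / θ) * exp (-(2 * θ * s))
    - (k / (θ * a * (a - θ)) + 1 / θ) * exp (-(2 * θ * t))
    + 2 * k / (a * (a - θ) * (a + θ)) * exp ((a - θ) * s) * exp (-((a + θ) * t))

section varianceIncrement

variable {k a θ : ℝ}

theorem varianceIncrement_eq (s t : ℝ) :
    varianceIncrement k a θ s t =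
      ((k / (θ * a * (a + θ)) + 1 / θ)
        - (k / (θ * a * (a - θ)) + 1 / θ) * exp (-(2 * θ * (t - s)))
        + 2 * k / (a * (a - θ) * (a + θ)) * exp (-((a + θ) * (t - s))))
      * exp (-(2 * θ * s)) := by
  simp only [varianceIncrement, add_mul, sub_mul, mul_assoc, ← exp_add]
  ring_nf

theorem coeff_minus_eq_coeff_plus_add (ha : a ≠ 0) (hθ : θ ≠ 0) (hsub : a - θ ≠ 0)
    (hadd : a + θ ≠ 0) :
    k / (θ * a * (a - θ)) + 1 / θ =
      (k / (θ * a * (a + θ)) + 1 / θ) + 2 * k / (a * (a - θ) * (a + θ)) := by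
  field_simp
  ring

theorem varianceIncrement_le (hk : 0 ≤ k) (hθ : 0 < θ) (hθa : θ < a) {s t : ℝ} (hst : s ≤ t) :
    varianceIncrement k a θ s t ≤
      (k / (θ * a * (a - θ)) + 1 / θ) * (1 - exp (-((a + θ) * (t - s)))) * exp (-(2 * θ * s)) := by
  have ha : 0 < a := hθ.trans hθa
  have hsub : 0 < a - θ := sub_pos.2 hθa
  rw [varianceIncrement_eq, coeff_minus_eq_coeff_plus_add ha.ne' hθ.ne' hsub.ne' (by linarith)]
  gcongr
  exact sub_mul_exp_add_mul_exp_le (by positivity) (by positivity) (by linarith) (by linarith)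
    (sub_nonneg.2 hst)

theorem sqrt_varianceIncrement_le (hk : 0 ≤ k) (hθ : 0 < θ) (hθa : θ < a) {s t : ℝ}
    (hst : s ≤ t) :
    √(varianceIncrement k a θ s t) ≤
      √(k / (θ * a * (a - θ)) + 1 / θ) * √(1 - exp (-((a + θ) * (t - s)))) * exp (-(θ * s)) := by
  have hB : 0 ≤ k / (θ * a * (a - θ)) + 1 / θ :=
    add_nonneg (div_nonneg hk (mul_pos (mul_pos hθ (hθ.trans hθa)) (sub_pos.2 hθa)).le)
      (one_div_nonneg.2 hθ.le)
  have hexp : exp (-(θ * s)) = √(exp (-(2 * θ * s))) := by rw [← exp_half]; ring_nf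
  rw [hexp, ← sqrt_mul hB, ← sqrt_mul' _ (exp_nonneg _)]
  exact sqrt_le_sqrt (varianceIncrement_le hk hθ hθa hst)

end varianceIncrement

theorem canonical_metric_bound_general
    (μ₁ μ₂ p θ : ℝ)
    (hp0 : 0 < p) (hp1 : p < 1)
    (hθ0 : 0 < θ) (hθ : θ < μ₁ * μ₂)
    (V : ℝ → ℝ → ℝ)
    (hV : ∀ s t : ℝ,
      V s t =
        (p * (1 - p) * (μ₁ - μ₂) ^ 2 / (θ * (μ₁ * μ₂) * (μ₁ * μ₂ + θ)) + 1 / θ)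
            * Real.exp (-(2 * θ * s))
        - (p * (1 - p) * (μ₁ - μ₂) ^ 2 / (θ * (μ₁ * μ₂) * (μ₁ * μ₂ - θ)) + 1 / θ)
            * Real.exp (-(2 * θ * t))
        + 2 * p * (1 - p) * (μ₁ - μ₂) ^ 2
              / ((μ₁ * μ₂) * (μ₁ * μ₂ - θ) * (μ₁ * μ₂ + θ))
            * Real.exp ((μ₁ * μ₂ - θ) * s) * Real.exp (-((μ₁ * μ₂ + θ) * t))) :
    ∀ s t : ℝ, 0 ≤ s → s ≤ t →
      Real.sqrt (V s t)
        ≤ 4 * Real.sqrt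
              (p * (1 - p) * (μ₁ - μ₂) ^ 2 / ((μ₁ * μ₂) * (μ₁ * μ₂ - θ) * θ)
                + 1 / θ)
            * Real.sqrt (1 - Real.exp (-((μ₁ * μ₂ + θ) * (t - s))))
            * Real.exp (-(θ * s)) := by
  intro s t _ hst
  have hk : 0 ≤ p * (1 - p) * (μ₁ - μ₂) ^ 2 :=
    mul_nonneg (mul_nonneg hp0.le (sub_nonneg.2 hp1.le)) (sq_nonneg _)
  have hVeq : V s t = varianceIncrement (p * (1 - p) * (μ₁ - μ₂) ^ 2) (μ₁ * μ₂) θ s t := by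
    rw [hV, varianceIncrement]
    ring
  have hB : p * (1 - p) * (μ₁ - μ₂) ^ 2 / ((μ₁ * μ₂) * (μ₁ * μ₂ - θ) * θ) =
      p * (1 - p) * (μ₁ - μ₂) ^ 2 / (θ * (μ₁ * μ₂) * (μ₁ * μ₂ - θ)) := by
    ring
  rw [hVeq, hB, mul_assoc 4, mul_assoc 4]
  exact (sqrt_varianceIncrement_le hk hθ0 hθ hst).trans
    (le_mul_of_one_le_left (by positivity) (by norm_num))

/-- Explicit bound on the canonical pseudo-metric: for all `0 ≤ s ≤ t`,
`√(V(s,t)) ≤ 4√(p(1−p)(μ₁−μ₂)²/(μ₁μ₂(μ₁μ₂−θ)θ) + 1/θ)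
· √(1 − e^{−(μ₁μ₂+θ)(t−s)}) · e^{−θs}`. -/
theorem canonical_metric_bound
    (μ₁ μ₂ p θ : ℝ)
    (hμ₁ : 0 < μ₁) (hμ₂ : 0 < μ₂)
    (hp0 : 0 < p) (hp1 : p < 1)
    (hθ0 : 0 < θ) (hθ : θ < μ₁ * μ₂)
    (V : ℝ → ℝ → ℝ)
    (hV : ∀ s t : ℝ,
      V s t =
        (p * (1 - p) * (μ₁ - μ₂) ^ 2 / (θ * (μ₁ * μ₂) * (μ₁ * μ₂ + θ)) + 1 / θ)
            * Real.exp (-(2 * θ * s))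
        - (p * (1 - p) * (μ₁ - μ₂) ^ 2 / (θ * (μ₁ * μ₂) * (μ₁ * μ₂ - θ)) + 1 / θ)
            * Real.exp (-(2 * θ * t))
        + 2 * p * (1 - p) * (μ₁ - μ₂) ^ 2
              / ((μ₁ * μ₂) * (μ₁ * μ₂ - θ) * (μ₁ * μ₂ + θ))
            * Real.exp ((μ₁ * μ₂ - θ) * s) * Real.exp (-((μ₁ * μ₂ + θ) * t))) :
    ∀ s t : ℝ, 0 ≤ s → s ≤ t →
      Real.sqrt (V s t)
        ≤ 4 * Real.sqrt
              (p * (1 - p) * (μ₁ - μ₂) ^ 2 / ((μ₁ * μ₂) * (μ₁ * μ₂ - θ) * θ)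
                + 1 / θ)
            * Real.sqrt (1 - Real.exp (-((μ₁ * μ₂ + θ) * (t - s))))
            * Real.exp (-(θ * s)) :=
  canonical_metric_bound_general μ₁ μ₂ p θ hp0 hp1 hθ0 hθ V hV
end

section
/- Let μ₁, μ₂ be positive reals, p ∈ (0,1), and 0 < θ < μ₁μ₂. Define V(s,t) := (p(1−p)(μ₁−μ₂)²/(θμ₁μ₂(μ₁μ₂+θ)) + 1/θ)·exp(−2θs) − (p(1−p)(μ₁−μ₂)²/(θμ₁μ₂(μ₁μ₂−θ)) + 1/θ)·exp(−2θt) + (2p(1−p)(μ₁−μ₂)²/(μ₁μ₂(μ₁μ₂−θ)(μ₁μ₂+θ)))·exp((μ₁μ₂−θ)s)·exp(−(μ₁μ₂+θ)t), and set C₀ := 4·√( p(1−p)(μ₁−μ₂)²/(μ₁μ₂(μ₁μ₂−θ)θ) + 1/θ )·√(1 + μ₁μ₂ + θ). Then for all 0 ≤ s ≤ t, √(V(s,t)) ≤ C₀·√(t−s). -/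
/-!
Write `m = μ₁μ₂`, `a = p(1−p)(μ₁−μ₂)²`, `K₊ = a/(θm(m+θ))` and `K₋ = a/(θm(m−θ))`. Since
`K₋ − K₊ = 2a/(m(m−θ)(m+θ))`, the variance splits as
`V(s,t) = (K₊ + 1/θ)(e^{−2θs} − e^{−2θt}) − (K₋ − K₊)(e^{−2θt} − e^{(m−θ)s − (m+θ)t})`.
The second bracket is nonnegative because `s ≤ t`, and `e^{−x}` is 1-Lipschitz on `[0, ∞)`, so
`V(s,t) ≤ 2θ(K₊ + 1/θ)(t − s)`. Finally `K₊ ≤ K₋` and `2θ ≤ 16(1 + m + θ)` give the bound by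
`C₀²(t − s)`.
-/

open Real

lemma Real.exp_neg_sub_exp_neg_le (x y : ℝ) : exp (-x) - exp (-y) ≤ exp (-x) * (y - x) := by
  have h : exp (-y) = exp (-x) * exp (-(y - x)) := by rw [← exp_add]; ring_nf
  nlinarith [one_sub_le_exp_neg (y - x), exp_pos (-x)]

lemma Real.exp_neg_sub_exp_neg_le_sub {x y : ℝ} (hx : 0 ≤ x) (hxy : x ≤ y) :
    exp (-x) - exp (-y) ≤ y - x :=
  (exp_neg_sub_exp_neg_le x y).trans <|
    mul_le_of_le_one_left (sub_nonneg.mpr hxy) (exp_le_one_iff.mpr (neg_nonpos.mpr hx))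

section IncrementVariance

variable {a m θ s t : ℝ}

/-- The increment variance `V(s, t)` of the paper, with `m = μ₁μ₂` and `a = p(1−p)(μ₁−μ₂)²`. -/
noncomputable def incrementVariance (a m θ s t : ℝ) : ℝ :=
  (a / (θ * m * (m + θ)) + 1 / θ) * exp (-(2 * θ * s))
    - (a / (θ * m * (m - θ)) + 1 / θ) * exp (-(2 * θ * t))
    + 2 * a / (m * (m - θ) * (m + θ)) * exp ((m - θ) * s) * exp (-((m + θ) * t))

lemma incrementVariance_eq (hθ : 0 < θ) (hθm : θ < m) :
    incrementVariance a m θ s t =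
      (a / (θ * m * (m + θ)) + 1 / θ) * (exp (-(2 * θ * s)) - exp (-(2 * θ * t)))
        - 2 * a / (m * (m - θ) * (m + θ))
          * (exp (-(2 * θ * t)) - exp ((m - θ) * s) * exp (-((m + θ) * t))) := by
  have hm : m ≠ 0 := by linarith
  have hmθ : m - θ ≠ 0 := by linarith
  have hmθ' : m + θ ≠ 0 := by linarith
  unfold incrementVariance
  field_simp
  ring

lemma incrementVariance_le (ha : 0 ≤ a) (hθ : 0 < θ) (hθm : θ < m) (hs : 0 ≤ s)
    (hst : s ≤ t) :
    incrementVariance a m θ s t ≤ 2 * θ * (a / (θ * m * (m + θ)) + 1 / θ) * (t - s) := by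
  have hm : 0 < m := hθ.trans hθm
  have hmθ : 0 < m - θ := by linarith
  have hlip : exp (-(2 * θ * s)) - exp (-(2 * θ * t)) ≤ 2 * θ * t - 2 * θ * s :=
    exp_neg_sub_exp_neg_le_sub (by positivity) (by gcongr)
  have hcross : exp ((m - θ) * s) * exp (-((m + θ) * t)) ≤ exp (-(2 * θ * t)) := by
    rw [← exp_add, exp_le_exp]
    nlinarith
  have hB : 0 ≤ 2 * a / (m * (m - θ) * (m + θ)) := by positivity
  have hK : 0 ≤ a / (θ * m * (m + θ)) + 1 / θ := by positivity
  rw [incrementVariance_eq hθ hθm]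
  nlinarith [mul_le_mul_of_nonneg_left hlip hK, mul_nonneg hB (sub_nonneg.mpr hcross)]

lemma incrementVariance_le_sq_mul (ha : 0 ≤ a) (hθ : 0 < θ) (hθm : θ < m) (hs : 0 ≤ s)
    (hst : s ≤ t) :
    incrementVariance a m θ s t ≤
      (4 * √(a / (m * (m - θ) * θ) + 1 / θ) * √(1 + m + θ) * √(t - s)) ^ 2 := by
  have hm : 0 < m := hθ.trans hθm
  have hmθ : 0 < m - θ := by linarith
  have hts : 0 ≤ t - s := sub_nonneg.mpr hst
  have hcoeff : a / (θ * m * (m + θ)) ≤ a / (m * (m - θ) * θ) := by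
    apply div_le_div_of_nonneg_left ha (by positivity)
    nlinarith [mul_pos hm hθ]
  have hK : 0 ≤ a / (m * (m - θ) * θ) + 1 / θ := by positivity
  rw [mul_pow, mul_pow, mul_pow, sq_sqrt hK, sq_sqrt (by positivity), sq_sqrt hts]
  calc incrementVariance a m θ s t
      ≤ 2 * θ * (a / (θ * m * (m + θ)) + 1 / θ) * (t - s) := incrementVariance_le ha hθ hθm hs hst
    _ ≤ 2 * θ * (a / (m * (m - θ) * θ) + 1 / θ) * (t - s) := by gcongr
    _ ≤ 4 ^ 2 * (a / (m * (m - θ) * θ) + 1 / θ) * (1 + m + θ) * (t - s) := by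
      nlinarith [mul_nonneg hK hts, mul_nonneg (mul_nonneg hK hts) (add_nonneg hm.le hθ.le)]

end IncrementVariance

theorem canonical_metric_holder_bound_general
    (μ₁ μ₂ p θ : ℝ)
    (hp0 : 0 < p) (hp1 : p < 1)
    (hθ0 : 0 < θ) (hθ : θ < μ₁ * μ₂)
    (V : ℝ → ℝ → ℝ)
    (hV : ∀ s t : ℝ,
      V s t =
        (p * (1 - p) * (μ₁ - μ₂) ^ 2 / (θ * (μ₁ * μ₂) * (μ₁ * μ₂ + θ)) + 1 / θ)
            * Real.exp (-(2 * θ * s))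
        - (p * (1 - p) * (μ₁ - μ₂) ^ 2 / (θ * (μ₁ * μ₂) * (μ₁ * μ₂ - θ)) + 1 / θ)
            * Real.exp (-(2 * θ * t))
        + 2 * p * (1 - p) * (μ₁ - μ₂) ^ 2
              / ((μ₁ * μ₂) * (μ₁ * μ₂ - θ) * (μ₁ * μ₂ + θ))
            * Real.exp ((μ₁ * μ₂ - θ) * s) * Real.exp (-((μ₁ * μ₂ + θ) * t)))
    (C₀ : ℝ)
    (hC₀ : C₀ = 4 * Real.sqrt
        (p * (1 - p) * (μ₁ - μ₂) ^ 2 / ((μ₁ * μ₂) * (μ₁ * μ₂ - θ) * θ) + 1 / θ)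
        * Real.sqrt (1 + μ₁ * μ₂ + θ)) :
    ∀ s t : ℝ, 0 ≤ s → s ≤ t →
      Real.sqrt (V s t) ≤ C₀ * Real.sqrt (t - s) := by
  intro s t hs hst
  have ha : 0 ≤ p * (1 - p) * (μ₁ - μ₂) ^ 2 :=
    mul_nonneg (mul_nonneg hp0.le (sub_nonneg.mpr hp1.le)) (sq_nonneg _)
  have hVeq : V s t = incrementVariance (p * (1 - p) * (μ₁ - μ₂) ^ 2) (μ₁ * μ₂) θ s t := by
    rw [hV, incrementVariance]
    ring
  rw [sqrt_le_left (by rw [hC₀]; positivity), hVeq, hC₀]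
  exact incrementVariance_le_sq_mul ha hθ0 hθ hs hst

/-- Hölder-type bound on the canonical pseudo-metric: with
`C₀ = 4√(p(1−p)(μ₁−μ₂)²/(μ₁μ₂(μ₁μ₂−θ)θ) + 1/θ)·√(1 + μ₁μ₂ + θ)`,
for all `0 ≤ s ≤ t` one has `√(V(s,t)) ≤ C₀√(t−s)`. -/
theorem canonical_metric_holder_bound
    (μ₁ μ₂ p θ : ℝ)
    (hμ₁ : 0 < μ₁) (hμ₂ : 0 < μ₂)
    (hp0 : 0 < p) (hp1 : p < 1)
    (hθ0 : 0 < θ) (hθ : θ < μ₁ * μ₂)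
    (V : ℝ → ℝ → ℝ)
    (hV : ∀ s t : ℝ,
      V s t =
        (p * (1 - p) * (μ₁ - μ₂) ^ 2 / (θ * (μ₁ * μ₂) * (μ₁ * μ₂ + θ)) + 1 / θ)
            * Real.exp (-(2 * θ * s))
        - (p * (1 - p) * (μ₁ - μ₂) ^ 2 / (θ * (μ₁ * μ₂) * (μ₁ * μ₂ - θ)) + 1 / θ)
            * Real.exp (-(2 * θ * t))
        + 2 * p * (1 - p) * (μ₁ - μ₂) ^ 2
              / ((μ₁ * μ₂) * (μ₁ * μ₂ - θ) * (μ₁ * μ₂ + θ))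
            * Real.exp ((μ₁ * μ₂ - θ) * s) * Real.exp (-((μ₁ * μ₂ + θ) * t)))
    (C₀ : ℝ)
    (hC₀ : C₀ = 4 * Real.sqrt
        (p * (1 - p) * (μ₁ - μ₂) ^ 2 / ((μ₁ * μ₂) * (μ₁ * μ₂ - θ) * θ) + 1 / θ)
        * Real.sqrt (1 + μ₁ * μ₂ + θ)) :
    ∀ s t : ℝ, 0 ≤ s → s ≤ t →
      Real.sqrt (V s t) ≤ C₀ * Real.sqrt (t - s) :=
  canonical_metric_holder_bound_general μ₁ μ₂ p θ hp0 hp1 hθ0 hθ V hV C₀ hC₀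
end

section
/- Let μ₁, μ₂ be positive reals, p ∈ (0,1), and 0 < θ < μ₁μ₂. Define P(s,t) := ((μ₁−μ₂)²p(1−p)/((μ₁μ₂+θ)(μ₁μ₂−θ)θ) + 1/θ)·exp(−θ(t−s)) + (2(μ₁−μ₂)²p(1−p)/((μ₁μ₂+θ)(μ₁μ₂−θ)²))·exp(−μ₁μ₂·s − θ·t) − ((μ₁−μ₂)²p(1−p)/(θ(μ₁μ₂−θ)²) + 1/θ)·exp(−θ(s+t)) − ((μ₁−μ₂)²p(1−p)/(μ₁μ₂(μ₁μ₂+θ)(μ₁μ₂−θ)))·exp(−μ₁μ₂(t−s)) + (2(μ₁−μ₂)²p(1−p)/((μ₁μ₂+θ)(μ₁μ₂−θ)²))·exp(−θ·s − μ₁μ₂·t) − ((μ₁−μ₂)²p(1−p)/(μ₁μ₂(μ₁μ₂−θ)²))·exp(−μ₁μ₂(s+t)). Then P(s,t) ≥ 0 for all 0 ≤ s ≤ t. -/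
/-!
Write `m = μ₁μ₂`, `c = (μ₁ - μ₂)²p(1-p) ≥ 0`, `E = e^{-θ(t-s)}` and `F = e^{-m(t-s)} ≤ E`. Then
`θm(m+θ)(m-θ)² P(s,t) = c (E H(s) + θ G(s) (E - F)) + m(m+θ)(m-θ)² E (1 - e^{-2θs})`, where
`G(s) = (m-θ) + (m+θ)e^{-2ms} - 2m e^{-(m+θ)s} ≥ 0` by convexity of `exp`, and
`H(s) = 2θm(m+θ) ∫₀ˢ (e^{-θu} - e^{-mu})² du ≥ 0`.
-/

open Real intervalIntegral

theorem integral_exp_neg_mul {c : ℝ} (hc : c ≠ 0) (s : ℝ) :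
    ∫ u in (0 : ℝ)..s, exp (-(c * u)) = (1 - exp (-(c * s))) / c := by
  have h := integral_comp_mul_left exp (neg_ne_zero.mpr hc) (a := 0) (b := s)
  simp only [neg_mul, mul_zero, integral_exp, exp_zero, smul_eq_mul] at h
  rw [h]
  field_simp
  ring

theorem intervalIntegrable_exp_neg_mul (c a b : ℝ) :
    IntervalIntegrable (fun u => exp (-(c * u))) MeasureTheory.volume a b := by
  apply Continuous.intervalIntegrable
  fun_prop

theorem integral_sq_exp_neg_sub_exp_neg {a b : ℝ} (ha : a ≠ 0) (hb : b ≠ 0) (hab : a + b ≠ 0)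
    (s : ℝ) :
    2 * a * b * (a + b) * ∫ u in (0 : ℝ)..s, (exp (-(a * u)) - exp (-(b * u))) ^ 2 =
      (b - a) ^ 2 + 4 * a * b * exp (-((a + b) * s)) - b * (a + b) * exp (-(2 * a * s))
        - a * (a + b) * exp (-(2 * b * s)) := by
  have hsq (u : ℝ) : (exp (-(a * u)) - exp (-(b * u))) ^ 2
      = exp (-(2 * a * u)) + exp (-(2 * b * u)) - 2 * exp (-((a + b) * u)) := by
    have hpow (c : ℝ) : exp (-(2 * c * u)) = exp (-(c * u)) ^ 2 := by
      rw [← exp_nat_mul]; ring_nf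
    have hmul : exp (-((a + b) * u)) = exp (-(a * u)) * exp (-(b * u)) := by
      rw [← exp_add]; ring_nf
    rw [hpow, hpow, hmul]
    ring
  simp_rw [hsq]
  rw [integral_sub ((intervalIntegrable_exp_neg_mul _ _ _).add
      (intervalIntegrable_exp_neg_mul _ _ _)) ((intervalIntegrable_exp_neg_mul _ _ _).const_mul 2),
    integral_add (intervalIntegrable_exp_neg_mul _ _ _) (intervalIntegrable_exp_neg_mul _ _ _),
    integral_const_mul, integral_exp_neg_mul (by simpa), integral_exp_neg_mul (by simpa),
    integral_exp_neg_mul hab]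
  field_simp
  ring

theorem two_mul_mul_exp_neg_le_of_abs_le {m θ : ℝ} (hθ : |θ| ≤ m) (s : ℝ) :
    2 * m * exp (-((m + θ) * s)) ≤ (m - θ) + (m + θ) * exp (-(2 * m * s)) := by
  obtain ⟨hθl, hθr⟩ := abs_le.mp hθ
  rcases (abs_nonneg θ |>.trans hθ).eq_or_lt with rfl | hm
  · simp
  have ha : 0 ≤ (m - θ) / (2 * m) := div_nonneg (by linarith) (by linarith)
  have hb : 0 ≤ (m + θ) / (2 * m) := div_nonneg (by linarith) (by linarith)
  have hab : (m - θ) / (2 * m) + (m + θ) / (2 * m) = 1 := by field_simp; ring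
  have hconv := convexOn_exp.2 (Set.mem_univ 0) (Set.mem_univ (-(2 * m * s))) ha hb hab
  simp only [smul_eq_mul, mul_zero, zero_add, exp_zero, mul_one] at hconv
  rw [show (m + θ) / (2 * m) * -(2 * m * s) = -((m + θ) * s) by field_simp] at hconv
  calc 2 * m * exp (-((m + θ) * s))
      ≤ 2 * m * ((m - θ) / (2 * m) + (m + θ) / (2 * m) * exp (-(2 * m * s))) := by gcongr
    _ = (m - θ) + (m + θ) * exp (-(2 * m * s)) := by field_simp

/-- `P(s,t)` with `m = μ₁μ₂` and `c = (μ₁ - μ₂)²p(1-p)`. -/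
noncomputable def piCovariance (m θ c s t : ℝ) : ℝ :=
  (c / ((m + θ) * (m - θ) * θ) + 1 / θ) * exp (-(θ * (t - s)))
    + 2 * c / ((m + θ) * (m - θ) ^ 2) * exp (-(m * s) - θ * t)
    - (c / (θ * (m - θ) ^ 2) + 1 / θ) * exp (-(θ * (s + t)))
    - c / (m * (m + θ) * (m - θ)) * exp (-(m * (t - s)))
    + 2 * c / ((m + θ) * (m - θ) ^ 2) * exp (-(θ * s) - m * t)
    - c / (m * (m - θ) ^ 2) * exp (-(m * (s + t)))

theorem piCovariance_nonneg {m θ c s t : ℝ} (hθ : 0 < θ) (hm : θ < m) (hc : 0 ≤ c)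
    (hs : 0 ≤ s) (hst : s ≤ t) : 0 ≤ piCovariance m θ c s t := by
  have hm0 : 0 < m := hθ.trans hm
  have hmθ : 0 < m - θ := sub_pos.2 hm
  have hG := sub_nonneg.2 (two_mul_mul_exp_neg_le_of_abs_le (abs_le.2 ⟨by linarith, hm.le⟩) s)
  set G := (m - θ) + (m + θ) * exp (-(2 * m * s)) - 2 * m * exp (-((m + θ) * s))
  have hH : 0 ≤ (m - θ) ^ 2 + 4 * θ * m * exp (-((θ + m) * s))
      - m * (θ + m) * exp (-(2 * θ * s)) - θ * (θ + m) * exp (-(2 * m * s)) := by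
    rw [← integral_sq_exp_neg_sub_exp_neg hθ.ne' hm0.ne' (by positivity)]
    have := integral_nonneg (μ := MeasureTheory.volume) hs
      fun u _ => sq_nonneg (exp (-(θ * u)) - exp (-(m * u)))
    positivity
  set H := (m - θ) ^ 2 + 4 * θ * m * exp (-((θ + m) * s))
      - m * (θ + m) * exp (-(2 * θ * s)) - θ * (θ + m) * exp (-(2 * m * s))
  have hdecay : exp (-(m * (t - s))) ≤ exp (-(θ * (t - s))) := exp_le_exp.2 (by nlinarith)
  have hstart : exp (-(2 * θ * s)) ≤ 1 := exp_le_one_iff.2 (by nlinarith)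
  have key : θ * m * (m + θ) * (m - θ) ^ 2 * piCovariance m θ c s t =
      c * (exp (-(θ * (t - s))) * H + θ * G * (exp (-(θ * (t - s))) - exp (-(m * (t - s)))))
        + m * (m + θ) * (m - θ) ^ 2 * exp (-(θ * (t - s))) * (1 - exp (-(2 * θ * s))) := by
    simp only [piCovariance, G, H, mul_add, add_mul, mul_sub, sub_mul, neg_add, neg_sub, two_mul,
      exp_add, exp_sub, exp_neg]
    field_simp
    ring
  have hscaled : 0 ≤ θ * m * (m + θ) * (m - θ) ^ 2 * piCovariance m θ c s t := by
    rw [key]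
    have := sub_nonneg.2 hdecay
    have := sub_nonneg.2 hstart
    positivity
  exact (mul_nonneg_iff_of_pos_left (by positivity)).1 hscaled

theorem pi_covariance_nonneg_general
    (μ₁ μ₂ p θ : ℝ)
    (hp0 : 0 < p) (hp1 : p < 1)
    (hθ0 : 0 < θ) (hθ : θ < μ₁ * μ₂)
    (P : ℝ → ℝ → ℝ)
    (hP : ∀ s t : ℝ,
      P s t =
        ((μ₁ - μ₂) ^ 2 * p * (1 - p)
              / ((μ₁ * μ₂ + θ) * (μ₁ * μ₂ - θ) * θ) + 1 / θ)
            * Real.exp (-(θ * (t - s)))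
        + 2 * (μ₁ - μ₂) ^ 2 * p * (1 - p)
              / ((μ₁ * μ₂ + θ) * (μ₁ * μ₂ - θ) ^ 2)
            * Real.exp (-(μ₁ * μ₂ * s) - θ * t)
        - ((μ₁ - μ₂) ^ 2 * p * (1 - p) / (θ * (μ₁ * μ₂ - θ) ^ 2) + 1 / θ)
            * Real.exp (-(θ * (s + t)))
        - (μ₁ - μ₂) ^ 2 * p * (1 - p)
              / ((μ₁ * μ₂) * (μ₁ * μ₂ + θ) * (μ₁ * μ₂ - θ))
            * Real.exp (-(μ₁ * μ₂ * (t - s)))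
        + 2 * (μ₁ - μ₂) ^ 2 * p * (1 - p)
              / ((μ₁ * μ₂ + θ) * (μ₁ * μ₂ - θ) ^ 2)
            * Real.exp (-(θ * s) - μ₁ * μ₂ * t)
        - (μ₁ - μ₂) ^ 2 * p * (1 - p) / ((μ₁ * μ₂) * (μ₁ * μ₂ - θ) ^ 2)
            * Real.exp (-(μ₁ * μ₂ * (s + t)))) :
    ∀ s t : ℝ, 0 ≤ s → s ≤ t → 0 ≤ P s t := by
  intro s t hs hst
  have hc : 0 ≤ (μ₁ - μ₂) ^ 2 * p * (1 - p) := by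
    have : 0 < 1 - p := sub_pos.2 hp1
    positivity
  convert piCovariance_nonneg hθ0 hθ hc hs hst using 1
  rw [hP, piCovariance]
  ring

/-- Nonnegativity of the covariance of the lower-bound Gaussian process `Π`:
`P(s,t) ≥ 0` for all `0 ≤ s ≤ t`, where `P(s,t) = E[Π(s)Π(t)]` is the
explicit covariance formula. -/
theorem pi_covariance_nonneg
    (μ₁ μ₂ p θ : ℝ)
    (hμ₁ : 0 < μ₁) (hμ₂ : 0 < μ₂)
    (hp0 : 0 < p) (hp1 : p < 1)
    (hθ0 : 0 < θ) (hθ : θ < μ₁ * μ₂)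
    (P : ℝ → ℝ → ℝ)
    (hP : ∀ s t : ℝ,
      P s t =
        ((μ₁ - μ₂) ^ 2 * p * (1 - p)
              / ((μ₁ * μ₂ + θ) * (μ₁ * μ₂ - θ) * θ) + 1 / θ)
            * Real.exp (-(θ * (t - s)))
        + 2 * (μ₁ - μ₂) ^ 2 * p * (1 - p)
              / ((μ₁ * μ₂ + θ) * (μ₁ * μ₂ - θ) ^ 2)
            * Real.exp (-(μ₁ * μ₂ * s) - θ * t)
        - ((μ₁ - μ₂) ^ 2 * p * (1 - p) / (θ * (μ₁ * μ₂ - θ) ^ 2) + 1 / θ)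
            * Real.exp (-(θ * (s + t)))
        - (μ₁ - μ₂) ^ 2 * p * (1 - p)
              / ((μ₁ * μ₂) * (μ₁ * μ₂ + θ) * (μ₁ * μ₂ - θ))
            * Real.exp (-(μ₁ * μ₂ * (t - s)))
        + 2 * (μ₁ - μ₂) ^ 2 * p * (1 - p)
              / ((μ₁ * μ₂ + θ) * (μ₁ * μ₂ - θ) ^ 2)
            * Real.exp (-(θ * s) - μ₁ * μ₂ * t)
        - (μ₁ - μ₂) ^ 2 * p * (1 - p) / ((μ₁ * μ₂) * (μ₁ * μ₂ - θ) ^ 2)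
            * Real.exp (-(μ₁ * μ₂ * (s + t)))) :
    ∀ s t : ℝ, 0 ≤ s → s ≤ t → 0 ≤ P s t :=
  pi_covariance_nonneg_general μ₁ μ₂ p θ hp0 hp1 hθ0 hθ P hP
end
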